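/- (Theorem 3: V is invariant under T_J, T_GS, and T_GSJ.) For every v ∈ ℝ^S with Tv ≤ v, each of the vectors T_J v, T_GS v, and T_GSJ v again satisfies the constraint defining V: T(T_J v) ≤ T_J v, T(T_GS v) ≤ T_GS v, and T(T_GSJ v) ≤ T_GSJ v. That is, T_J(V) ⊆ V, T_GS(V) ⊆ V, and T_GSJ(V) ⊆ V. -/
import Mathlib


noncomputable def Tval {S : Type*} [Fintype S] {A : S → Type*}
    [∀ i, Fintype (A i)] [∀ i, Nonempty (A i)]
    (r : ∀ i, A i → ℝ) (p : ∀ i, A i → S → ℝ) (lam : ℝ) (v : S → ℝ) (i : S) : ℝ :=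
  Finset.univ.sup' Finset.univ_nonempty fun a : A i =>
    r i a + lam * ∑ j, p i a j * v j

noncomputable def TJ {S : Type*} [Fintype S] [DecidableEq S] {A : S → Type*}
    [∀ i, Fintype (A i)] [∀ i, Nonempty (A i)]
    (r : ∀ i, A i → ℝ) (p : ∀ i, A i → S → ℝ) (lam : ℝ) (v : S → ℝ) (i : S) : ℝ :=
  Finset.univ.sup' Finset.univ_nonempty fun a : A i =>
    (r i a + lam * ∑ j ∈ Finset.univ.filter fun j => j ≠ i, p i a j * v j) /
      (1 - lam * p i a i)

noncomputable def TGS {S : Type*} [Fintype S] [LinearOrder S] {A : S → Type*}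
    [∀ i, Fintype (A i)] [∀ i, Nonempty (A i)]
    (r : ∀ i, A i → ℝ) (p : ∀ i, A i → S → ℝ) (lam : ℝ) (v : S → ℝ) (i : S) : ℝ :=
  Finset.univ.sup' Finset.univ_nonempty fun a : A i =>
    r i a + lam * (∑ j ∈ (Finset.univ.filter fun j => j < i).attach,
        p i a j.1 * TGS r p lam v j.1)
      + lam * ∑ j ∈ Finset.univ.filter fun j => i ≤ j, p i a j * v j
termination_by (Finset.univ.filter fun j => j < i).card
decreasing_by
  have hj : j.1 < i := (Finset.mem_filter.mp j.2).2
  apply Finset.card_lt_card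
  rw [Finset.ssubset_iff_of_subset]
  · exact ⟨j.1, Finset.mem_filter.mpr ⟨Finset.mem_univ _, hj⟩, by simp⟩
  · intro x hx
    exact Finset.mem_filter.mpr ⟨Finset.mem_univ _, (Finset.mem_filter.mp hx).2.trans hj⟩

noncomputable def TGSJ {S : Type*} [Fintype S] [LinearOrder S] {A : S → Type*}
    [∀ i, Fintype (A i)] [∀ i, Nonempty (A i)]
    (r : ∀ i, A i → ℝ) (p : ∀ i, A i → S → ℝ) (lam : ℝ) (v : S → ℝ) (i : S) : ℝ :=
  Finset.univ.sup' Finset.univ_nonempty fun a : A i =>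
    (r i a + lam * (∑ j ∈ (Finset.univ.filter fun j => j < i).attach,
        p i a j.1 * TGSJ r p lam v j.1)
      + lam * ∑ j ∈ Finset.univ.filter fun j => i < j, p i a j * v j) /
      (1 - lam * p i a i)
termination_by (Finset.univ.filter fun j => j < i).card
decreasing_by
  have hj : j.1 < i := (Finset.mem_filter.mp j.2).2
  apply Finset.card_lt_card
  rw [Finset.ssubset_iff_of_subset]
  · exact ⟨j.1, Finset.mem_filter.mpr ⟨Finset.mem_univ _, hj⟩, by simp⟩
  · intro x hx
    exact Finset.mem_filter.mpr ⟨Finset.mem_univ _, (Finset.mem_filter.mp hx).2.trans hj⟩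

theorem V_invariant_under_TJ_TGS_TGSJ {S : Type*} [Fintype S] [Nonempty S] [LinearOrder S] {A : S → Type*}
    [∀ i, Fintype (A i)] [∀ i, Nonempty (A i)]
    (r : ∀ i, A i → ℝ) (p : ∀ i, A i → S → ℝ) (lam : ℝ)
    (hp : ∀ i (a : A i) (j : S), 0 ≤ p i a j)
    (hp1 : ∀ i (a : A i), ∑ j, p i a j = 1)
    (hlam0 : 0 ≤ lam) (hlam1 : lam < 1) :
    ∀ v : S → ℝ, (∀ i, Tval r p lam v i ≤ v i) →
      (∀ i, Tval r p lam (TJ r p lam v) i ≤ TJ r p lam v i) ∧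
      (∀ i, Tval r p lam (TGS r p lam v) i ≤ TGS r p lam v i) ∧
      (∀ i, Tval r p lam (TGSJ r p lam v) i ≤ TGSJ r p lam v i) := by
  intro v hv
  have hD : ∀ i (a : A i), 0 < 1 - lam * p i a i := by
    intro i a
    have h1 : p i a i ≤ 1 := by
      rw [← hp1 i a]
      exact Finset.single_le_sum (fun j _ => hp i a j) (Finset.mem_univ i)
    nlinarith [hp i a i]
  have hq : ∀ i (a : A i), r i a + lam * ∑ j, p i a j * v j ≤ v i := fun i a =>
    le_trans (Finset.le_sup' (fun a : A i => r i a + lam * ∑ j, p i a j * v j)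
      (Finset.mem_univ a)) (hv i)
  -- sum splitting lemmas
  have hsplit_ne : ∀ i (a : A i) (w : S → ℝ),
      ∑ j, p i a j * w j
        = (∑ j ∈ Finset.univ.filter fun j => j ≠ i, p i a j * w j) + p i a i * w i := by
    intro i a w
    rw [Finset.filter_ne']
    exact (Finset.sum_erase_add _ _ (Finset.mem_univ i)).symm
  have hfilter_le : ∀ i : S, (Finset.univ.filter fun j => ¬ j < i)
      = (Finset.univ.filter fun j : S => i ≤ j) := by
    intro i; ext j; simp [not_lt]
  have hsplit_lt : ∀ i (a : A i) (w : S → ℝ),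
      ∑ j, p i a j * w j
        = (∑ j ∈ Finset.univ.filter fun j => j < i, p i a j * w j)
          + ∑ j ∈ Finset.univ.filter fun j => i ≤ j, p i a j * w j := by
    intro i a w
    rw [← hfilter_le i]
    exact (Finset.sum_filter_add_sum_filter_not Finset.univ _ _).symm
  have hinsert : ∀ i : S, (Finset.univ.filter fun j : S => i ≤ j)
      = insert i (Finset.univ.filter fun j : S => i < j) := by
    intro i; ext j
    simp [le_iff_lt_or_eq, or_comm, eq_comm]
  have hsplit3 : ∀ i (a : A i) (w : S → ℝ),
      ∑ j, p i a j * w j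
        = (∑ j ∈ Finset.univ.filter fun j => j < i, p i a j * w j) + p i a i * w i
          + ∑ j ∈ Finset.univ.filter fun j => i < j, p i a j * w j := by
    intro i a w
    rw [hsplit_lt i a w, hinsert i, Finset.sum_insert (by simp)]
    ring
  -- Part A: Jacobi
  have hJle : ∀ i, TJ r p lam v i ≤ v i := by
    intro i
    apply Finset.sup'_le
    intro a _
    rw [div_le_iff₀ (hD i a)]
    have h2 := hq i a
    rw [hsplit_ne i a v] at h2
    nlinarith [h2]
  have hJinv : ∀ i, Tval r p lam (TJ r p lam v) i ≤ TJ r p lam v i := by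
    intro i
    apply Finset.sup'_le
    intro a _
    set u := TJ r p lam v with hu
    have h1 : ∑ j ∈ Finset.univ.filter fun j => j ≠ i, p i a j * u j
        ≤ ∑ j ∈ Finset.univ.filter fun j => j ≠ i, p i a j * v j :=
      Finset.sum_le_sum fun j _ => mul_le_mul_of_nonneg_left (hJle j) (hp i a j)
    have h2 : (r i a + lam * ∑ j ∈ Finset.univ.filter fun j => j ≠ i, p i a j * v j) /
        (1 - lam * p i a i) ≤ u i :=
      Finset.le_sup' (fun a : A i =>
        (r i a + lam * ∑ j ∈ Finset.univ.filter fun j => j ≠ i, p i a j * v j) /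
          (1 - lam * p i a i)) (Finset.mem_univ a)
    rw [div_le_iff₀ (hD i a)] at h2
    rw [hsplit_ne i a u]
    nlinarith [mul_le_mul_of_nonneg_left h1 hlam0]
  -- Part B: Gauss-Seidel
  have hGSle : ∀ i, TGS r p lam v i ≤ v i := by
    intro i
    induction i using WellFoundedLT.induction with
    | ind i ih =>
      rw [TGS]
      apply Finset.sup'_le
      intro a _
      rw [Finset.sum_attach _ (fun j => p i a j * TGS r p lam v j)]
      have h1 : ∑ j ∈ Finset.univ.filter fun j => j < i, p i a j * TGS r p lam v j
          ≤ ∑ j ∈ Finset.univ.filter fun j => j < i, p i a j * v j :=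
        Finset.sum_le_sum fun j hj => mul_le_mul_of_nonneg_left
          (ih j (Finset.mem_filter.mp hj).2) (hp i a j)
      have h2 := hq i a
      rw [hsplit_lt i a v] at h2
      nlinarith [mul_le_mul_of_nonneg_left h1 hlam0]
  have hGSinv : ∀ i, Tval r p lam (TGS r p lam v) i ≤ TGS r p lam v i := by
    intro i
    apply Finset.sup'_le
    intro a _
    set u := TGS r p lam v with hu
    have h1 : ∑ j ∈ Finset.univ.filter fun j => i ≤ j, p i a j * u j
        ≤ ∑ j ∈ Finset.univ.filter fun j => i ≤ j, p i a j * v j :=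
      Finset.sum_le_sum fun j _ => mul_le_mul_of_nonneg_left (hGSle j) (hp i a j)
    have h2 : r i a + lam * (∑ j ∈ (Finset.univ.filter fun j => j < i).attach,
          p i a j.1 * u j.1)
        + lam * ∑ j ∈ Finset.univ.filter fun j => i ≤ j, p i a j * v j ≤ u i := by
      rw [hu, TGS]
      exact Finset.le_sup' (fun a : A i =>
        r i a + lam * (∑ j ∈ (Finset.univ.filter fun j => j < i).attach,
            p i a j.1 * TGS r p lam v j.1)
          + lam * ∑ j ∈ Finset.univ.filter fun j => i ≤ j, p i a j * v j)
        (Finset.mem_univ a)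
    rw [Finset.sum_attach _ (fun j => p i a j * u j)] at h2
    rw [hsplit_lt i a u]
    nlinarith [mul_le_mul_of_nonneg_left h1 hlam0]
  -- Part C: Gauss-Seidel-Jacobi
  have hGSJle : ∀ i, TGSJ r p lam v i ≤ v i := by
    intro i
    induction i using WellFoundedLT.induction with
    | ind i ih =>
      rw [TGSJ]
      apply Finset.sup'_le
      intro a _
      rw [div_le_iff₀ (hD i a)]
      rw [Finset.sum_attach _ (fun j => p i a j * TGSJ r p lam v j)]
      have h1 : ∑ j ∈ Finset.univ.filter fun j => j < i, p i a j * TGSJ r p lam v j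
          ≤ ∑ j ∈ Finset.univ.filter fun j => j < i, p i a j * v j :=
        Finset.sum_le_sum fun j hj => mul_le_mul_of_nonneg_left
          (ih j (Finset.mem_filter.mp hj).2) (hp i a j)
      have h2 := hq i a
      rw [hsplit3 i a v] at h2
      nlinarith [mul_le_mul_of_nonneg_left h1 hlam0]
  have hGSJinv : ∀ i, Tval r p lam (TGSJ r p lam v) i ≤ TGSJ r p lam v i := by
    intro i
    apply Finset.sup'_le
    intro a _
    set u := TGSJ r p lam v with hu
    have h1 : ∑ j ∈ Finset.univ.filter fun j => i < j, p i a j * u j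
        ≤ ∑ j ∈ Finset.univ.filter fun j => i < j, p i a j * v j :=
      Finset.sum_le_sum fun j _ => mul_le_mul_of_nonneg_left (hGSJle j) (hp i a j)
    have h2 : (r i a + lam * (∑ j ∈ (Finset.univ.filter fun j => j < i).attach,
          p i a j.1 * u j.1)
        + lam * ∑ j ∈ Finset.univ.filter fun j => i < j, p i a j * v j) /
          (1 - lam * p i a i) ≤ u i := by
      rw [hu, TGSJ]
      exact Finset.le_sup' (fun a : A i =>
        (r i a + lam * (∑ j ∈ (Finset.univ.filter fun j => j < i).attach,
            p i a j.1 * TGSJ r p lam v j.1)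
          + lam * ∑ j ∈ Finset.univ.filter fun j => i < j, p i a j * v j) /
            (1 - lam * p i a i)) (Finset.mem_univ a)
    rw [Finset.sum_attach _ (fun j => p i a j * u j)] at h2
    rw [div_le_iff₀ (hD i a)] at h2
    rw [hsplit3 i a u]
    nlinarith [mul_le_mul_of_nonneg_left h1 hlam0]
  exact ⟨hJinv, hGSinv, hGSJinv⟩
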